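/- Every exponential $e^{ikt}$ with $|k| \le n$ can be written as a linear combination of the translates $\varphi_n(\cdot - 2\pi j/(2n+1))$, $j = -n,\ldots,n$, with coefficients $\frac{1}{(2n+1)\cos(k\pi/(2n+2))} e^{2\pi i jk/(2n+1)}$. -/

import Mathlib

/-!
Write `N = 2n+1`. The translate `φ_n(· - 2πj/N)` has `m`-th Fourier coefficient
`cos(mπ/(2n+2)) e^{-2πijm/N}`. Weighting the translates by `e^{2πijk/N}` and summing over a full
period of `j` kills every coefficient with `m ≠ k` by orthogonality of the `N`-th roots of unity
(`|k - m| ≤ 2n < N`), and multiplies the `k`-th one by `N`; it remains to divide by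
`cos(kπ/(2n+2))`, which is positive since `|kπ/(2n+2)| < π/2`.
-/

open Complex Real

/-- The localized trigonometric polynomial `φ_n(t) = ∑_{k=-n}^n e^{ikt} cos(kπ/(2n+2))`. -/
noncomputable def phi (n : ℕ) (t : ℝ) : ℂ :=
  ∑ k ∈ Finset.Icc (-(n : ℤ)) (n : ℤ),
    Complex.exp (Complex.I * (k : ℂ) * (t : ℂ)) *
      ((Real.cos (((k : ℝ) * Real.pi) / (2*(n : ℝ)+2))) : ℂ)

open Finset

theorem sum_zpow_Ico_add_eq_zero {K : Type*} [Field K] {ζ : K} {N : ℕ} (hζN : ζ ^ N = 1)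
    (hζ : ζ ≠ 1) (a : ℤ) : ∑ j ∈ Ico a (a + N), ζ ^ j = 0 := by
  obtain rfl | hN := eq_or_ne N 0
  · simp
  have hζ0 : ζ ≠ 0 := by rintro rfl; simp [zero_pow hN] at hζN
  rw [Int.Ico_eq_finset_map, sum_map, add_sub_cancel_left, Int.toNat_natCast]
  simp only [Function.Embedding.trans_apply, Nat.castEmbedding_apply, addLeftEmbedding_apply,
    zpow_add₀ hζ0, zpow_natCast, ← mul_sum, geom_sum_eq hζ, hζN, sub_self, zero_div, mul_zero]

theorem sum_exp_two_pi_I_mul_div_Icc (n : ℕ) {d : ℤ} (hd : |d| ≤ 2 * n) :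
    ∑ j ∈ Icc (-(n : ℤ)) n, exp (2 * π * I * j * d / (2 * n + 1)) =
      if d = 0 then (2 * n + 1 : ℂ) else 0 := by
  split_ifs with hd0
  · simp only [hd0, Int.cast_zero, mul_zero, zero_div, Complex.exp_zero, sum_const, Int.card_Icc,
      nsmul_eq_mul, mul_one]
    rw [show (n + 1 - -n : ℤ).toNat = 2 * n + 1 by omega]
    push_cast; ring
  · have hω := isPrimitiveRoot_exp (2 * n + 1) (by omega)
    push_cast at hω
    set ω := exp (2 * π * I / (2 * n + 1))
    have hterm (j : ℤ) : exp (2 * π * I * j * d / (2 * n + 1)) = (ω ^ d) ^ j := by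
      rw [← zpow_mul, ← exp_int_mul]; push_cast; ring_nf
    have hIcc : Icc (-(n : ℤ)) n = Ico (-(n : ℤ)) (-n + (2 * n + 1 : ℕ)) := by
      ext; simp only [mem_Icc, mem_Ico]; omega
    simp only [hterm, hIcc]
    refine sum_zpow_Ico_add_eq_zero ?_ ?_ _
    · rw [← zpow_natCast, ← zpow_mul, mul_comm, zpow_mul, zpow_natCast, hω.pow_eq_one, one_zpow]
    · rw [Ne, hω.zpow_eq_one_iff_dvd]
      exact fun hdvd => hd0 (Int.eq_zero_of_abs_lt_dvd (by exact_mod_cast hdvd) (by push_cast; omega))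

theorem cos_mul_pi_div_two_mul_add_two_pos {n : ℕ} {x : ℝ} (hx : |x| ≤ n) :
    0 < Real.cos (x * π / (2 * n + 2)) := by
  have hn : (0 : ℝ) < 2 * n + 2 := by positivity
  apply cos_pos_of_mem_Ioo
  rw [Set.mem_Ioo, ← abs_lt, abs_div, abs_mul, abs_of_pos pi_pos, abs_of_pos hn, div_lt_iff₀ hn]
  nlinarith [pi_pos]

/-- Every exponential `e^{ikt}` with `|k| ≤ n` is the linear combination of the translates
`φ_n(· - 2πj/(2n+1))`, `j = -n, …, n`, with coefficients
`e^{2πijk/(2n+1)} / ((2n+1)·cos(kπ/(2n+2)))`. -/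
theorem stmt6 (n : ℕ) (k : ℤ) (hk : |k| ≤ (n : ℤ)) (t : ℝ) :
    Complex.exp (Complex.I * (k : ℂ) * (t : ℂ)) =
      ∑ j ∈ Finset.Icc (-(n : ℤ)) (n : ℤ),
        (Complex.exp (2 * (Real.pi : ℂ) * Complex.I * (j : ℂ) * (k : ℂ) / (2*(n : ℂ)+1)) /
            ((2*(n : ℂ)+1) * ((Real.cos (((k : ℝ) * Real.pi) / (2*(n : ℝ)+2))) : ℂ))) *
          phi n (t - 2*Real.pi*(j : ℝ)/(2*(n : ℝ)+1)) := by
  have hN : (2 * n + 1 : ℂ) ≠ 0 := by exact_mod_cast (2 * n).succ_ne_zero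
  have hc : (Real.cos (k * π / (2 * n + 2)) : ℂ) ≠ 0 :=
    ofReal_ne_zero.mpr (cos_mul_pi_div_two_mul_add_two_pos (by exact_mod_cast hk)).ne'
  have hkmem : k ∈ Icc (-(n : ℤ)) n := mem_Icc.mpr (abs_le.mp hk)
  have hshift (j m : ℤ) : exp (2 * π * I * j * k / (2 * n + 1)) *
      exp (I * m * ((t - 2 * π * j / (2 * n + 1) : ℝ) : ℂ)) =
        exp (I * m * t) * exp (2 * π * I * j * (k - m : ℤ) / (2 * n + 1)) := by
    rw [← Complex.exp_add, ← Complex.exp_add]; congr 1; push_cast; ring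
  calc exp (I * k * t)
      = ∑ m ∈ Icc (-(n : ℤ)) n, exp (I * m * t) * Real.cos (m * π / (2 * n + 2)) /
          ((2 * n + 1) * Real.cos (k * π / (2 * n + 2))) *
          (if k - m = 0 then (2 * n + 1 : ℂ) else 0) := by
        rw [sum_eq_single_of_mem k hkmem]
        · rw [sub_self, if_pos rfl, mul_comm (2 * n + 1 : ℂ), ← div_div, div_mul_cancel₀ _ hN,
            mul_div_cancel_right₀ _ hc]
        · intro m _ hmk; simp [sub_eq_zero, Ne.symm hmk]
    _ = ∑ m ∈ Icc (-(n : ℤ)) n, ∑ j ∈ Icc (-(n : ℤ)) n,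
          exp (I * m * t) * Real.cos (m * π / (2 * n + 2)) /
          ((2 * n + 1) * Real.cos (k * π / (2 * n + 2))) *
          exp (2 * π * I * j * (k - m : ℤ) / (2 * n + 1)) := by
        refine sum_congr rfl fun m hm => ?_
        rw [← mul_sum, sum_exp_two_pi_I_mul_div_Icc]
        rw [mem_Icc] at hm hkmem
        rw [abs_le]; constructor <;> omega
    _ = _ := by
        rw [sum_comm]; refine sum_congr rfl fun j _ => ?_
        rw [phi, mul_sum]; refine sum_congr rfl fun m _ => ?_
        linear_combination (-(Real.cos (m * π / (2 * n + 2)) : ℂ) /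
          ((2 * n + 1) * Real.cos (k * π / (2 * n + 2)))) * hshift j m
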